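/- arXiv:2201.10073 — 2 statements merged into one kernel-verified Lean document; each statement's English description precedes it below -/
import Mathlib

section
/- If θ = min(min_k(max(α_k, β_k)), 1) where for k=1,2,3, α_k = (min(c, b_k) − c)/(p_k − c) and β_k = (max(c, b_k) − c)/(p_k − c) with p_k ≠ c, then θ ∈ [0,1] and the corrected values q_k = θ(p_k − c) + c satisfy min(c, b_k) ≤ q_k ≤ max(c, b_k) for all k, provided each interval [min(α_k,β_k), max(α_k,β_k)] contains 0. -/
theorem stmt_0 (c : ℝ) (b p : Fin 3 → ℝ)
    (hp : ∀ k, p k ≠ c)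
    (α β : Fin 3 → ℝ)
    (hα : ∀ k, α k = (min c (b k) - c) / (p k - c))
    (hβ : ∀ k, β k = (max c (b k) - c) / (p k - c))
    (hzero : ∀ k, min (α k) (β k) ≤ 0 ∧ 0 ≤ max (α k) (β k))
    (θ : ℝ)
    (hθ : θ = min (min (max (α 0) (β 0)) (min (max (α 1) (β 1)) (max (α 2) (β 2)))) 1) :
    (0 ≤ θ ∧ θ ≤ 1) ∧
      ∀ k, min c (b k) ≤ θ * (p k - c) + c ∧ θ * (p k - c) + c ≤ max c (b k) := by
  have h0 : 0 ≤ θ := by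
    rw [hθ]
    simp only [le_min_iff]
    exact ⟨⟨(hzero 0).2, (hzero 1).2, (hzero 2).2⟩, zero_le_one⟩
  have h1 : θ ≤ 1 := hθ ▸ min_le_right _ _
  refine ⟨⟨h0, h1⟩, fun k => ?_⟩
  have hk : θ ≤ max (α k) (β k) := by
    rw [hθ]
    fin_cases k
    · exact le_trans (min_le_left _ _) (min_le_left _ _)
    · exact le_trans (min_le_left _ _) (le_trans (min_le_right _ _) (min_le_left _ _))
    · exact le_trans (min_le_left _ _) (le_trans (min_le_right _ _) (min_le_right _ _))
  have hd : p k - c ≠ 0 := sub_ne_zero.mpr (hp k)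
  have hαd : α k * (p k - c) = min c (b k) - c := by rw [hα]; field_simp
  have hβd : β k * (p k - c) = max c (b k) - c := by rw [hβ]; field_simp
  have hm : min c (b k) - c ≤ 0 := by simp [min_le_left]
  have hM : 0 ≤ max c (b k) - c := by simp [le_max_left]
  rcases lt_or_gt_of_ne hd with hneg | hpos
  · -- d < 0 : α ≥ 0 ≥ β, max = α
    have hαpos : 0 ≤ α k := by
      rw [hα]; exact div_nonneg_of_nonpos hm hneg.le
    have hβneg : β k ≤ 0 := by
      rw [hβ]; exact div_nonpos_of_nonneg_of_nonpos hM hneg.le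
    have hkα : θ ≤ α k := le_trans hk (by rw [max_eq_left (hβneg.trans hαpos)])
    constructor
    · nlinarith [mul_le_mul_of_nonpos_right hkα hneg.le]
    · nlinarith [mul_nonpos_of_nonneg_of_nonpos h0 hneg.le]
  · -- d > 0 : α ≤ 0 ≤ β, max = β
    have hβpos : 0 ≤ β k := by
      rw [hβ]; exact div_nonneg hM hpos.le
    have hαneg : α k ≤ 0 := by
      rw [hα]; exact div_nonpos_of_nonpos_of_nonneg hm hpos.le
    have hkβ : θ ≤ β k := le_trans hk (by rw [max_eq_right (hαneg.trans hβpos)])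
    constructor
    · nlinarith [mul_nonneg h0 hpos.le]
    · nlinarith [mul_le_mul_of_nonneg_right hkβ hpos.le]
end

section
/- The Jacobian matrix in direction n = (cos θ, sin θ) of the 2-D shallow water system with variable density has extremal eigenvalues λ± = u·cos θ + v·sin θ ± sqrt((g/ρ₀)·h·ρ), where h > 0, ρ > 0, g > 0, ρ₀ > 0. -/
/-! With `q = u cos θ + v sin θ` the normal velocity, cofactor expansion gives the characteristic
polynomial `(X - q)² ((X - q)² - 2 p ρ (cos² θ + sin² θ))` of the directional Jacobian, where
`p = g h / (2 ρ₀)`. Since `cos² θ + sin² θ = 1` and `2 p ρ = (g / ρ₀) h ρ = c²` for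
`c = √((g / ρ₀) h ρ)`, the second factor splits as `(X - (q + c)) (X - (q - c))`. -/

open Polynomial

theorem Matrix.det_fin_four {R : Type*} [CommRing R] (M : Matrix (Fin 4) (Fin 4) R) :
    M.det =
      M 0 0 * (M 1 1 * (M 2 2 * M 3 3 - M 2 3 * M 3 2) -
        M 1 2 * (M 2 1 * M 3 3 - M 2 3 * M 3 1) +
        M 1 3 * (M 2 1 * M 3 2 - M 2 2 * M 3 1)) -
      M 0 1 * (M 1 0 * (M 2 2 * M 3 3 - M 2 3 * M 3 2) -
        M 1 2 * (M 2 0 * M 3 3 - M 2 3 * M 3 0) +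
        M 1 3 * (M 2 0 * M 3 2 - M 2 2 * M 3 0)) +
      M 0 2 * (M 1 0 * (M 2 1 * M 3 3 - M 2 3 * M 3 1) -
        M 1 1 * (M 2 0 * M 3 3 - M 2 3 * M 3 0) +
        M 1 3 * (M 2 0 * M 3 1 - M 2 1 * M 3 0)) -
      M 0 3 * (M 1 0 * (M 2 1 * M 3 2 - M 2 2 * M 3 1) -
        M 1 1 * (M 2 0 * M 3 2 - M 2 2 * M 3 0) +
        M 1 2 * (M 2 0 * M 3 1 - M 2 1 * M 3 0)) := by
  rw [Matrix.det_succ_row_zero]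
  simp only [Fin.sum_univ_succ, Matrix.det_fin_three, Matrix.submatrix_apply, Fin.succAbove,
    Fin.succ_zero_eq_one, Fin.succ_one_eq_two, Fin.castSucc_zero, Fin.castSucc_one, Fin.reduceSucc,
    Fin.reduceCastSucc, Fin.reduceLT, Fin.succ_pos, Fin.lt_one_iff, Fin.reduceEq, Fin.isValue,
    Fin.val_succ, Fin.coe_ofNat_eq_mod, Nat.zero_mod, Finset.univ_unique, Fin.default_eq_zero,
    Fin.val_eq_zero, Finset.sum_singleton, lt_self_iff_false, not_lt_zero, ↓reduceIte, zero_add,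
    pow_zero, pow_one, one_mul, neg_mul]
  ring

/-- The Jacobian `a ∂F/∂U + b ∂G/∂U` of the variable-density shallow water fluxes at the state
`(w, hu, hv, hρ)`, with `p = g h / (2 ρ₀)`. -/
def shallowWaterJacobian {R : Type*} [CommRing R] (a b u v p ρ : R) :
    Matrix (Fin 4) (Fin 4) R :=
  Matrix.of
    ![![0, a, b, 0],
      ![a * (-u ^ 2 + p * ρ) + b * (-(u * v)), a * (2 * u) + b * v, b * u, a * p],
      ![a * (-(u * v)) + b * (-v ^ 2 + p * ρ), a * v, a * u + b * (2 * v), b * p],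
      ![a * (-(u * ρ)) + b * (-(v * ρ)), a * ρ, b * ρ, a * u + b * v]]

theorem charpoly_shallowWaterJacobian {R : Type*} [CommRing R] (a b u v p ρ : R) :
    (shallowWaterJacobian a b u v p ρ).charpoly =
      (X - C (u * a + v * b)) ^ 2 *
        ((X - C (u * a + v * b)) ^ 2 - C (2 * p * ρ * (a ^ 2 + b ^ 2))) := by
  rw [Matrix.charpoly, Matrix.det_fin_four]
  simp only [shallowWaterJacobian, Matrix.charmatrix_apply_eq, Matrix.charmatrix_apply_ne,
    Matrix.of_apply, Matrix.cons_val', Matrix.cons_val_zero, Matrix.cons_val_one,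
    Matrix.cons_val_fin_one, Matrix.cons_val, ne_eq, Fin.reduceEq, Fin.isValue, not_false_eq_true,
    zero_ne_one, one_ne_zero, map_zero, map_add, map_mul, map_neg, map_pow, map_ofNat]
  ring

open Polynomial in
theorem stmt_7 (u v h ρ g ρ₀ θ : ℝ)
    (hh : 0 < h) (hρ : 0 < ρ) (hg : 0 < g) (hρ₀ : 0 < ρ₀)
    (cθ sθ : ℝ) (hc : cθ = Real.cos θ) (hs : sθ = Real.sin θ)
    (J : Matrix (Fin 4) (Fin 4) ℝ)
    (hJ : J = Matrix.of
      ![![0, cθ, sθ, 0],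
        ![cθ * (-u ^ 2 + g / (2 * ρ₀) * h * ρ) + sθ * (-(u * v)),
          cθ * (2 * u) + sθ * v, sθ * u, cθ * (g / (2 * ρ₀) * h)],
        ![cθ * (-(u * v)) + sθ * (-v ^ 2 + g / (2 * ρ₀) * h * ρ),
          cθ * v, cθ * u + sθ * (2 * v), sθ * (g / (2 * ρ₀) * h)],
        ![cθ * (-(u * ρ)) + sθ * (-(v * ρ)), cθ * ρ, sθ * ρ, cθ * u + sθ * v]]) :
    J.charpoly =
      (X - C (u * cθ + v * sθ + Real.sqrt (g / ρ₀ * h * ρ))) *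
      (X - C (u * cθ + v * sθ - Real.sqrt (g / ρ₀ * h * ρ))) *
      (X - C (u * cθ + v * sθ)) ^ 2 := by
  have hsq : Real.sqrt (g / ρ₀ * h * ρ) ^ 2 =
      2 * (g / (2 * ρ₀) * h) * ρ * (cθ ^ 2 + sθ ^ 2) := by
    rw [hc, hs, Real.cos_sq_add_sin_sq, Real.sq_sqrt (by positivity)]
    field_simp
  rw [hJ, show Matrix.of _ = shallowWaterJacobian cθ sθ u v (g / (2 * ρ₀) * h) ρ from rfl,
    charpoly_shallowWaterJacobian, ← hsq]
  simp only [map_add, map_sub, map_pow]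
  ring
end
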